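/- arXiv:1302.6599 — 4 statements merged into one kernel-verified Lean document; each statement's English description precedes it below -/
import Mathlib

section
/- Let 1 ≤ p ≤ N, let β₁,…,β_N ∈ ℝ^d satisfy β₁+⋯+β_p = 0, let r₁,…,r_N ∈ [0,1] with r₁ ≤ r₂ ≤ ⋯ ≤ r_p, and set r = Σ_{k=1}^N r_kβ_k. Then for every h ∈ {1,…,p}: (a) r_h − r_j ∈ [0,1] for all j < h and r_j − r_h ∈ [0,1] for all h < j ≤ p; (b) r = Σ_{j<h} (r_h−r_j)(−β_j) + Σ_{h<j≤p} (r_j−r_h)β_j + Σ_{j>p} r_jβ_j; consequently r belongs to the zonotope Z(Ψ_h) of the system Ψ_h consisting of the N−1 vectors −β₁,…,−β_{h−1}, β_{h+1},…,β_p, β_{p+1},…,β_N. -/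
open Finset

/-!
Subtracting `r_h • (β₁ + ⋯ + β_p) = 0` from `r` recentres the first `p` coefficients at `r_h`:
`r = Σ_{j ≤ p} (r_j − r_h) β_j + Σ_{j > p} r_j β_j`. The `h`-th coefficient vanishes, and by
monotonicity the others lie in `[0, 1]` once the sign of `β_j` is flipped for `j < h`.
-/

def Zonotope {d m : ℕ} (δ : Fin m → EuclideanSpace ℝ (Fin d)) :
    Set (EuclideanSpace ℝ (Fin d)) :=
  {v | ∃ t : Fin m → ℝ, (∀ j, t j ∈ Set.Icc (0 : ℝ) 1) ∧ v = ∑ j, t j • δ j}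

lemma sub_mem_Icc_zero_one_of_le {a b : ℝ} (ha : a ∈ Set.Icc (0 : ℝ) 1)
    (hb : b ∈ Set.Icc (0 : ℝ) 1) (hab : a ≤ b) : b - a ∈ Set.Icc (0 : ℝ) 1 :=
  ⟨sub_nonneg.2 hab, by linarith [ha.1, hb.2]⟩

lemma sum_smul_eq_sum_ite_sub_smul {R M ι : Type*} [Ring R] [AddCommGroup M] [Module R M]
    [Fintype ι] (P : ι → Prop) [DecidablePred P] {β : ι → M}
    (hβ : ∑ k ∈ univ.filter P, β k = 0) (r : ι → R) (c : R) :
    ∑ k, r k • β k = ∑ k, (if P k then r k - c else r k) • β k := by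
  have hcoeff : ∀ k, (if P k then r k - c else r k) • β k
      = r k • β k - if P k then c • β k else 0 := by
    intro k
    split_ifs <;> simp [sub_smul]
  rw [sum_congr rfl fun k _ => hcoeff k, sum_sub_distrib, ← sum_filter, ← smul_sum, hβ,
    smul_zero, sub_zero]

lemma sum_smul_mem_zonotope {d m : ℕ} (P : Fin m → Prop) [DecidablePred P]
    (β : Fin m → EuclideanSpace ℝ (Fin d)) (c : Fin m → ℝ)
    (hc : ∀ i, (if P i then -c i else c i) ∈ Set.Icc (0 : ℝ) 1) :
    ∑ i, c i • β i ∈ Zonotope (fun i => if P i then -β i else β i) := by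
  refine ⟨fun i => if P i then -c i else c i, hc, sum_congr rfl fun i _ => ?_⟩
  dsimp only
  split_ifs <;> simp

lemma sum_ite_sub_smul_eq_split {M : Type*} [AddCommGroup M] [Module ℝ M] {N p : ℕ}
    (β : Fin N → M) (r : Fin N → ℝ) {h : Fin N} (hh : (h : ℕ) < p) :
    ∑ k : Fin N, (if (k : ℕ) < p then r k - r h else r k) • β k =
      (∑ j ∈ univ.filter (fun j : Fin N => (j : ℕ) < h), (r h - r j) • (-β j)) +
      (∑ j ∈ univ.filter (fun j : Fin N => (h : ℕ) < j ∧ (j : ℕ) < p), (r j - r h) • β j) +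
      (∑ j ∈ univ.filter (fun j : Fin N => p ≤ (j : ℕ)), r j • β j) := by
  rw [sum_filter, sum_filter, sum_filter, ← sum_add_distrib, ← sum_add_distrib]
  refine sum_congr rfl fun j _ => ?_
  rcases lt_trichotomy (j : ℕ) h with hjh | hjh | hhj
  · have hhj : ¬ (h : ℕ) < j := by omega
    have hpj : ¬ p ≤ (j : ℕ) := by omega
    simp only [hjh, hjh.trans hh, hhj, hpj, false_and, if_true, if_false, smul_neg, add_zero]
    module
  · obtain rfl : j = h := Fin.ext hjh
    simp [hh]
  · have hjh : ¬ (j : ℕ) < h := by omega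
    by_cases hjp : (j : ℕ) < p
    · have hpj : ¬ p ≤ (j : ℕ) := by omega
      simp [hjh, hhj, hjp, hpj]
    · simp [hjh, hjp, le_of_not_gt hjp]

theorem statement1_general {d n : ℕ} (p : ℕ)
    (β : Fin (n + 1) → EuclideanSpace ℝ (Fin d)) (r : Fin (n + 1) → ℝ)
    (hr : ∀ k, r k ∈ Set.Icc (0 : ℝ) 1)
    (hmono : ∀ j k : Fin (n + 1), (j : ℕ) ≤ (k : ℕ) → (k : ℕ) < p → r j ≤ r k)
    (hsum : ∑ k ∈ univ.filter (fun k : Fin (n + 1) => (k : ℕ) < p), β k = 0) :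
    ∀ h : Fin (n + 1), (h : ℕ) < p →
      (∀ j : Fin (n + 1), (j : ℕ) < (h : ℕ) → r h - r j ∈ Set.Icc (0 : ℝ) 1) ∧
      (∀ j : Fin (n + 1), (h : ℕ) < (j : ℕ) → (j : ℕ) < p →
        r j - r h ∈ Set.Icc (0 : ℝ) 1) ∧
      ((∑ k, r k • β k) =
        (∑ j ∈ univ.filter (fun j : Fin (n + 1) => (j : ℕ) < (h : ℕ)),
            (r h - r j) • (-β j)) +
        (∑ j ∈ univ.filter (fun j : Fin (n + 1) => (h : ℕ) < (j : ℕ) ∧ (j : ℕ) < p),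
            (r j - r h) • β j) +
        (∑ j ∈ univ.filter (fun j : Fin (n + 1) => p ≤ (j : ℕ)), r j • β j)) ∧
      (∑ k, r k • β k) ∈ Zonotope (fun i : Fin n =>
        if (h.succAbove i : ℕ) < (h : ℕ) then -β (h.succAbove i) else β (h.succAbove i)) := by
  intro h hh
  have lower : ∀ j : Fin (n + 1), (j : ℕ) < h → r h - r j ∈ Set.Icc (0 : ℝ) 1 :=
    fun j hj => sub_mem_Icc_zero_one_of_le (hr j) (hr h) (hmono j h hj.le hh)
  have upper : ∀ j : Fin (n + 1), (h : ℕ) < j → (j : ℕ) < p → r j - r h ∈ Set.Icc (0 : ℝ) 1 :=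
    fun j hj hjp => sub_mem_Icc_zero_one_of_le (hr h) (hr j) (hmono h j hj.le hjp)
  have recenter := sum_smul_eq_sum_ite_sub_smul _ hsum r (r h)
  refine ⟨lower, upper, ?_, ?_⟩
  · rw [recenter, sum_ite_sub_smul_eq_split β r hh]
  · rw [recenter, Fin.sum_univ_succAbove _ h]
    simp only [hh, if_true, sub_self, zero_smul, zero_add]
    refine sum_smul_mem_zonotope _ _ _ fun i => ?_
    have hne : (h.succAbove i : ℕ) ≠ h := Fin.val_ne_of_ne (Fin.succAbove_ne h i)
    split_ifs with hlt hp hp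
    · simpa using lower _ hlt
    · omega
    · exact upper _ (by omega) hp
    · exact hr _

/-- With `0`-based indices: if `β₀ + ⋯ + β_{p−1} = 0`, all `r_k ∈ [0,1]`, and
`r₀ ≤ ⋯ ≤ r_{p−1}`, then for every `h < p`, (a) `r_h − r_j ∈ [0,1]` for `j < h` and
`r_j − r_h ∈ [0,1]` for `h < j < p`; (b) `r = Σ_{j<h} (r_h−r_j)(−β_j) +
Σ_{h<j<p} (r_j−r_h)β_j + Σ_{j≥p} r_jβ_j`; and consequently `r ∈ Z(Ψ_h)`, where `Ψ_h` is the
system of `n` vectors `−β₀,…,−β_{h−1}, β_{h+1},…,β_{p−1}, β_p,…,β_n` indexed by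
`Fin n` via `h.succAbove`. -/
theorem statement1 {d n : ℕ} (p : ℕ) (hp1 : 1 ≤ p) (hpN : p ≤ n + 1)
    (β : Fin (n + 1) → EuclideanSpace ℝ (Fin d)) (r : Fin (n + 1) → ℝ)
    (hr : ∀ k, r k ∈ Set.Icc (0 : ℝ) 1)
    (hmono : ∀ j k : Fin (n + 1), (j : ℕ) ≤ (k : ℕ) → (k : ℕ) < p → r j ≤ r k)
    (hsum : ∑ k ∈ univ.filter (fun k : Fin (n + 1) => (k : ℕ) < p), β k = 0) :
    ∀ h : Fin (n + 1), (h : ℕ) < p →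
      (∀ j : Fin (n + 1), (j : ℕ) < (h : ℕ) → r h - r j ∈ Set.Icc (0 : ℝ) 1) ∧
      (∀ j : Fin (n + 1), (h : ℕ) < (j : ℕ) → (j : ℕ) < p →
        r j - r h ∈ Set.Icc (0 : ℝ) 1) ∧
      ((∑ k, r k • β k) =
        (∑ j ∈ univ.filter (fun j : Fin (n + 1) => (j : ℕ) < (h : ℕ)),
            (r h - r j) • (-β j)) +
        (∑ j ∈ univ.filter (fun j : Fin (n + 1) => (h : ℕ) < (j : ℕ) ∧ (j : ℕ) < p),
            (r j - r h) • β j) +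
        (∑ j ∈ univ.filter (fun j : Fin (n + 1) => p ≤ (j : ℕ)), r j • β j)) ∧
      (∑ k, r k • β k) ∈ Zonotope (fun i : Fin n =>
        if (h.succAbove i : ℕ) < (h : ℕ) then -β (h.succAbove i) else β (h.succAbove i)) :=
  statement1_general p β r hr hmono hsum
end

section
/- Let 1 ≤ p ≤ N, let β₁,…,β_N ∈ ℝ^d satisfy β₁+⋯+β_p = 0, let r₁,…,r_N ∈ [0,1] with r₁ ≤ r₂ ≤ ⋯ ≤ r_p, and set r = Σ_{k=1}^N r_kβ_k. Let s₁,…,s_N ∈ ℝ satisfy: s_k ≥ 0 whenever r_k = 0, s_k ≤ 0 whenever r_k = 1 (for all k ∈ {1,…,N}), and s_j ≤ s_{j+1} whenever 1 ≤ j < p and r_j = r_{j+1}; set ε = Σ_{k=1}^N s_kβ_k. Then there exists t₀ > 0 such that for all t with 0 < t < t₀ and all h ∈ {1,…,p}, the point r + tε belongs to the zonotope Z(Ψ_h) of the system Ψ_h consisting of the N−1 vectors −β₁,…,−β_{h−1}, β_{h+1},…,β_p, β_{p+1},…,β_N. -/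
open Finset

/-!
Since `β₀ + ⋯ + β_{p−1} = 0`, subtracting `(r_h + t s_h) (β₀ + ⋯ + β_{p−1})` from `r + tε`
writes it in terms of `Ψ_h` with coefficients `(r_h − r_k) + t (s_h − s_k)` for `k < h`,
`(r_k − r_h) + t (s_k − s_h)` for `h < k < p` and `r_k + t s_k` for `k ≥ p`. Each has the form
`a + t b` with `a ∈ [0,1]`, `b ≥ 0` if `a = 0` and `b ≤ 0` if `a = 1`, so it lies in `[0,1]` for
all small `t > 0`. For the differences with `a = 0` this is where the ordering of `s` enters:
if `r_j = r_k` with `j ≤ k < p`, monotonicity makes `r` constant on `[j, k]`, and the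
inequalities `s_i ≤ s_{i+1}` chain up to `s_j ≤ s_k`.
-/

open Filter Topology

lemma eventually_nonneg_add_mul {a b : ℝ} (ha : 0 ≤ a) (hb : a = 0 → 0 ≤ b) :
    ∀ᶠ t in 𝓝[>] 0, 0 ≤ a + t * b := by
  rcases ha.eq_or_lt with rfl | ha
  · filter_upwards [self_mem_nhdsWithin] with t (ht : 0 < t)
    simpa using mul_nonneg ht.le (hb rfl)
  · have hlim : Tendsto (fun t : ℝ => a + t * b) (𝓝 0) (𝓝 a) :=
      (continuous_const.add (continuous_id.mul continuous_const)).tendsto' 0 a (by simp)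
    exact nhdsWithin_le_nhds (hlim.eventually (eventually_ge_nhds ha))

lemma eventually_add_mul_mem_Icc {a b : ℝ} (ha : a ∈ Set.Icc (0 : ℝ) 1) (hb0 : a = 0 → 0 ≤ b)
    (hb1 : a = 1 → b ≤ 0) : ∀ᶠ t in 𝓝[>] 0, a + t * b ∈ Set.Icc (0 : ℝ) 1 := by
  have hupper := eventually_nonneg_add_mul (sub_nonneg.2 ha.2) (b := -b)
    fun h => neg_nonneg.2 (hb1 (by linarith))
  filter_upwards [eventually_nonneg_add_mul ha.1 hb0, hupper] with t h0 h1
  exact ⟨h0, by linarith⟩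

section Chain

variable {n p : ℕ} {r s : Fin (n + 1) → ℝ}
  (hmono : ∀ j k : Fin (n + 1), (j : ℕ) ≤ (k : ℕ) → (k : ℕ) < p → r j ≤ r k)
  (hsmono : ∀ j k : Fin (n + 1), (k : ℕ) = (j : ℕ) + 1 → (k : ℕ) < p →
    r j = r k → s j ≤ s k)
include hmono hsmono

lemma le_of_eq_of_monotone_of_le_succ {j k : Fin (n + 1)} (hjk : (j : ℕ) ≤ k)
    (hkp : (k : ℕ) < p) (hr : r j = r k) : s j ≤ s k := by
  obtain ⟨k, hk⟩ := k
  change (j : ℕ) ≤ k at hjk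
  change k < p at hkp
  revert hk
  induction k, hjk using Nat.le_induction with
  | base => intro _ _; rfl
  | succ m hjm ih =>
    intro hk hr
    have hm : m < n + 1 := by omega
    have hrm : r j = r ⟨m, hm⟩ :=
      le_antisymm (hmono j _ hjm (show m < p by omega)) (hr ▸ hmono _ ⟨m + 1, hk⟩ (by simp) hkp)
    have hsm := ih (by omega) hm hrm
    have := hsmono ⟨m, hm⟩ ⟨m + 1, hk⟩ rfl hkp (hrm ▸ hr)
    linarith

lemma eventually_add_mul_sub_add_mul_mem_Icc (hr : ∀ k, r k ∈ Set.Icc (0 : ℝ) 1)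
    (hs0 : ∀ k, r k = 0 → 0 ≤ s k) (hs1 : ∀ k, r k = 1 → s k ≤ 0)
    {j k : Fin (n + 1)} (hjk : (j : ℕ) ≤ k) (hkp : (k : ℕ) < p) :
    ∀ᶠ t in 𝓝[>] 0, (r k + t * s k) - (r j + t * s j) ∈ Set.Icc (0 : ℝ) 1 := by
  obtain ⟨hrj0, hrj1⟩ := hr j
  obtain ⟨hrk0, hrk1⟩ := hr k
  have hmem : r k - r j ∈ Set.Icc (0 : ℝ) 1 :=
    ⟨sub_nonneg.2 (hmono j k hjk hkp), by linarith⟩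
  have hev := eventually_add_mul_mem_Icc hmem
    (fun h => sub_nonneg.2 (le_of_eq_of_monotone_of_le_succ hmono hsmono hjk hkp (by linarith)))
    (fun h => by linarith [hs1 k (by linarith), hs0 j (by linarith)])
  exact hev.mono fun t ht => by convert ht using 1; ring

end Chain

lemma sum_smul_mem_zonotope_succAbove {d n p : ℕ} {β : Fin (n + 1) → EuclideanSpace ℝ (Fin d)}
    (hsum : ∑ k ∈ univ.filter (fun k : Fin (n + 1) => (k : ℕ) < p), β k = 0)
    {u : Fin (n + 1) → ℝ} {h : Fin (n + 1)} (hh : (h : ℕ) < p)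
    (hlt : ∀ k : Fin (n + 1), (k : ℕ) < h → u h - u k ∈ Set.Icc (0 : ℝ) 1)
    (hmid : ∀ k : Fin (n + 1), (h : ℕ) < k → (k : ℕ) < p → u k - u h ∈ Set.Icc (0 : ℝ) 1)
    (hge : ∀ k : Fin (n + 1), p ≤ k → u k ∈ Set.Icc (0 : ℝ) 1) :
    ∑ k, u k • β k ∈ Zonotope (fun i : Fin n =>
      if (h.succAbove i : ℕ) < (h : ℕ) then -β (h.succAbove i) else β (h.succAbove i)) := by
  set c : Fin (n + 1) → ℝ := fun k => u k - if (k : ℕ) < p then u h else 0 with hc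
  have hsum_c : ∑ k, c k • β k = ∑ k, u k • β k := by
    simp only [hc, sub_smul, sum_sub_distrib, ite_smul, zero_smul, ← sum_filter, ← smul_sum,
      hsum, smul_zero, sub_zero]
  have hch : c h = 0 := by simp [hc, hh]
  refine ⟨fun i => if (h.succAbove i : ℕ) < h then -c (h.succAbove i) else c (h.succAbove i),
    fun i => ?_, ?_⟩
  · have hne : (h.succAbove i : ℕ) ≠ h := Fin.val_ne_of_ne (Fin.succAbove_ne h i)
    simp only [hc]
    split_ifs with h1 h2 h2
    · simpa using hlt _ h1
    · omega
    · simpa using hmid _ (by omega) h2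
    · simpa using hge _ (by omega)
  · rw [← hsum_c, Fin.sum_univ_succAbove _ h, hch, zero_smul, zero_add]
    refine sum_congr rfl fun i _ => ?_
    dsimp only
    split_ifs <;> simp

theorem statement2_general {d n : ℕ} (p : ℕ)
    (β : Fin (n + 1) → EuclideanSpace ℝ (Fin d)) (r : Fin (n + 1) → ℝ)
    (hr : ∀ k, r k ∈ Set.Icc (0 : ℝ) 1)
    (hmono : ∀ j k : Fin (n + 1), (j : ℕ) ≤ (k : ℕ) → (k : ℕ) < p → r j ≤ r k)
    (hsum : ∑ k ∈ univ.filter (fun k : Fin (n + 1) => (k : ℕ) < p), β k = 0)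
    (s : Fin (n + 1) → ℝ)
    (hs0 : ∀ k, r k = 0 → 0 ≤ s k)
    (hs1 : ∀ k, r k = 1 → s k ≤ 0)
    (hsmono : ∀ j k : Fin (n + 1), (k : ℕ) = (j : ℕ) + 1 → (k : ℕ) < p →
      r j = r k → s j ≤ s k) :
    ∃ t₀ : ℝ, 0 < t₀ ∧ ∀ t : ℝ, 0 < t → t < t₀ →
      ∀ h : Fin (n + 1), (h : ℕ) < p →
        (∑ k, r k • β k) + t • (∑ k, s k • β k) ∈
          Zonotope (fun i : Fin n =>
            if (h.succAbove i : ℕ) < (h : ℕ) then -β (h.succAbove i)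
            else β (h.succAbove i)) := by
  have hall : ∀ᶠ t in 𝓝[>] (0 : ℝ),
      (∀ j k : Fin (n + 1), (j : ℕ) ≤ k → (k : ℕ) < p →
        (r k + t * s k) - (r j + t * s j) ∈ Set.Icc (0 : ℝ) 1) ∧
      ∀ k, r k + t * s k ∈ Set.Icc (0 : ℝ) 1 := by
    simp only [eventually_and, eventually_all]
    exact ⟨fun j k => eventually_add_mul_sub_add_mul_mem_Icc hmono hsmono hr hs0 hs1,
      fun k => eventually_add_mul_mem_Icc (hr k) (hs0 k) (hs1 k)⟩
  obtain ⟨t₀, ht₀, hT⟩ := (nhdsGT_basis (0 : ℝ)).eventually_iff.1 hall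
  refine ⟨t₀, ht₀, fun t ht ht' h hh => ?_⟩
  obtain ⟨hpair_t, hsingle_t⟩ := hT ⟨ht, ht'⟩
  have hpoint : (∑ k, r k • β k) + t • ∑ k, s k • β k = ∑ k, (r k + t * s k) • β k := by
    simp only [add_smul, mul_smul, sum_add_distrib, smul_sum]
  rw [hpoint]
  exact sum_smul_mem_zonotope_succAbove hsum hh (fun k hk => hpair_t k h hk.le hh)
    (fun k hk hkp => hpair_t h k hk.le hkp) (fun k _ => hsingle_t k)

/-- With `0`-based indices: if `β₀ + ⋯ + β_{p−1} = 0`, all `r_k ∈ [0,1]`,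
`r₀ ≤ ⋯ ≤ r_{p−1}`, and `s` satisfies `s_k ≥ 0` when `r_k = 0`, `s_k ≤ 0` when `r_k = 1`,
and `s_j ≤ s_{j+1}` whenever `j+1 < p` and `r_j = r_{j+1}`, then with
`r = Σ r_kβ_k` and `ε = Σ s_kβ_k` there is `t₀ > 0` such that for `0 < t < t₀` and every
`h < p`, the point `r + tε` lies in the zonotope `Z(Ψ_h)`, where `Ψ_h` is the system of
`n` vectors `−β₀,…,−β_{h−1}, β_{h+1},…,β_{p−1}, β_p,…,β_n` indexed via `h.succAbove`. -/
theorem statement2 {d n : ℕ} (p : ℕ) (hp1 : 1 ≤ p) (hpN : p ≤ n + 1)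
    (β : Fin (n + 1) → EuclideanSpace ℝ (Fin d)) (r : Fin (n + 1) → ℝ)
    (hr : ∀ k, r k ∈ Set.Icc (0 : ℝ) 1)
    (hmono : ∀ j k : Fin (n + 1), (j : ℕ) ≤ (k : ℕ) → (k : ℕ) < p → r j ≤ r k)
    (hsum : ∑ k ∈ univ.filter (fun k : Fin (n + 1) => (k : ℕ) < p), β k = 0)
    (s : Fin (n + 1) → ℝ)
    (hs0 : ∀ k, r k = 0 → 0 ≤ s k)
    (hs1 : ∀ k, r k = 1 → s k ≤ 0)
    (hsmono : ∀ j k : Fin (n + 1), (k : ℕ) = (j : ℕ) + 1 → (k : ℕ) < p →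
      r j = r k → s j ≤ s k) :
    ∃ t₀ : ℝ, 0 < t₀ ∧ ∀ t : ℝ, 0 < t → t < t₀ →
      ∀ h : Fin (n + 1), (h : ℕ) < p →
        (∑ k, r k • β k) + t • (∑ k, s k • β k) ∈
          Zonotope (fun i : Fin n =>
            if (h.succAbove i : ℕ) < (h : ℕ) then -β (h.succAbove i)
            else β (h.succAbove i)) :=
  statement2_general p β r hr hmono hsum s hs0 hs1 hsmono
end

section
/- Let p ≥ 1 and let z₁,…,z_p ∈ ℂ satisfy exp(z_j) ≠ 1 for every j. Then (exp(z₁+⋯+z_p) − 1) · ∏_{j=1}^p 1/(exp(z_j) − 1) = Σ_{h=1}^p (−1)^{h−1} · ∏_{1≤j<h} 1/(exp(−z_j) − 1) · ∏_{h<j≤p} 1/(exp(z_j) − 1), where empty products are interpreted as 1. -/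
open Finset

/-! Put `u j = (exp z_j - 1)⁻¹`. Then `u j + 1 = exp z_j / (exp z_j - 1) = -(exp (-z_j) - 1)⁻¹`,
so the left-hand side is `∏ (u j + 1) - ∏ u j`, and expanding this difference in order
(`Finset.prod_add_ordered`) gives exactly the terms of the right-hand side. -/

section Field

variable {K : Type*} [Field K]

theorem inv_sub_one_add_one {x : K} (hx₀ : x ≠ 0) (hx₁ : x ≠ 1) :
    (x - 1)⁻¹ + 1 = -(x⁻¹ - 1)⁻¹ := by
  have : x - 1 ≠ 0 := sub_ne_zero.mpr hx₁
  have : 1 - x ≠ 0 := sub_ne_zero.mpr hx₁.symm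
  field_simp
  ring

variable {ι : Type*} {s : Finset ι} {x : ι → K}

theorem prod_sub_one_mul_prod_inv_sub_one (hx₁ : ∀ i ∈ s, x i ≠ 1) :
    (∏ i ∈ s, x i - 1) * ∏ i ∈ s, (x i - 1)⁻¹ =
      ∏ i ∈ s, ((x i - 1)⁻¹ + 1) - ∏ i ∈ s, (x i - 1)⁻¹ := by
  have hx : ∀ i ∈ s, (x i - 1)⁻¹ + 1 = x i * (x i - 1)⁻¹ := fun i hi => by
    have : x i - 1 ≠ 0 := sub_ne_zero.mpr (hx₁ i hi)
    field_simp
    ring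
  rw [prod_congr rfl hx, prod_mul_distrib]
  ring

theorem prod_sub_one_mul_prod_inv_sub_one_eq_sum [LinearOrder ι]
    (hx₀ : ∀ i ∈ s, x i ≠ 0) (hx₁ : ∀ i ∈ s, x i ≠ 1) :
    (∏ i ∈ s, x i - 1) * ∏ i ∈ s, (x i - 1)⁻¹ =
      ∑ i ∈ s, (-1 : K) ^ #{j ∈ s | j < i} *
        (∏ j ∈ s with j < i, ((x j)⁻¹ - 1)⁻¹) * ∏ j ∈ s with i < j, (x j - 1)⁻¹ := by
  rw [prod_sub_one_mul_prod_inv_sub_one hx₁, prod_add_ordered, add_sub_cancel_left]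
  refine sum_congr rfl fun i _ => ?_
  have hneg : ∀ j ∈ s.filter (· < i), (x j - 1)⁻¹ + 1 = -((x j)⁻¹ - 1)⁻¹ := fun j hj =>
    inv_sub_one_add_one (hx₀ j (mem_filter.mp hj).1) (hx₁ j (mem_filter.mp hj).1)
  rw [prod_congr rfl hneg, prod_neg, one_mul]

end Field

theorem statement3_general (p : ℕ) (z : Fin p → ℂ)
    (hz : ∀ j, Complex.exp (z j) ≠ 1) :
    (Complex.exp (∑ j, z j) - 1) * ∏ j, (Complex.exp (z j) - 1)⁻¹ =
      ∑ h : Fin p, (-1 : ℂ) ^ (h : ℕ) *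
        (∏ j ∈ univ.filter (fun j : Fin p => j < h), (Complex.exp (-z j) - 1)⁻¹) *
        (∏ j ∈ univ.filter (fun j : Fin p => h < j), (Complex.exp (z j) - 1)⁻¹) := by
  rw [Complex.exp_sum, prod_sub_one_mul_prod_inv_sub_one_eq_sum
    (fun j _ => Complex.exp_ne_zero (z j)) (fun j _ => hz j)]
  simp only [Complex.exp_neg, filter_gt_eq_Iio, Fin.card_Iio]

theorem statement3 (p : ℕ) (hp : 1 ≤ p) (z : Fin p → ℂ)
    (hz : ∀ j, Complex.exp (z j) ≠ 1) :
    (Complex.exp (∑ j, z j) - 1) * ∏ j, (Complex.exp (z j) - 1)⁻¹ =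
      ∑ h : Fin p, (-1 : ℂ) ^ (h : ℕ) *
        (∏ j ∈ univ.filter (fun j : Fin p => j < h), (Complex.exp (-z j) - 1)⁻¹) *
        (∏ j ∈ univ.filter (fun j : Fin p => h < j), (Complex.exp (z j) - 1)⁻¹) :=
  statement3_general p z hz
end

section
/- Let α₁,…,α_N ∈ ℝ^d and suppose there exists ξ ∈ ℝ^d with ⟨α_k,ξ⟩ > 0 for every k (i.e., the α_k generate a salient cone). Let y₁,…,y_N ∈ ℂ and let F : ℝ^d → ℂ be continuous with compact support. Then the function t ↦ exp(iΣ_k t_k y_k) F(Σ_k t_kα_k) is integrable on [0,∞)^N, only finitely many terms of the following sum are nonzero, and ∫_{[0,∞)^N} exp(iΣ_{k=1}^N t_k y_k) F(Σ_{k=1}^N t_kα_k) dt = Σ_{p∈ℕ^N} exp(iΣ_{k=1}^N p_k y_k) · ∫_{[0,1]^N} exp(iΣ_{k=1}^N t_k y_k) F(Σ_{k=1}^N (p_k + t_k)α_k) dt. -/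
/-!
If `⟨α_k, ξ⟩ > 0` for all `k` and `F` has compact support, then `⟨Σ t_k α_k, ξ⟩ ≥ t_j ⟨α_j, ξ⟩`
for `t ≥ 0`, so `F (Σ t_k α_k)` vanishes outside a bounded box of the orthant `[0,∞)^N`.
The integrand is therefore integrable there, and tiling the orthant by the unit cubes
`p + [0,1)^N`, `p ∈ ℕ^N`, turns the integral into a sum over cubes of which only those meeting
the box contribute. On the cube at `p` the exponential factor splits off `exp(iΣ p_k y_k)`.
-/

open MeasureTheory Set Function

section Tiling

variable {ι : Type*} {E : Type*} [NormedAddCommGroup E] [NormedSpace ℝ E]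

theorem pairwise_disjoint_pi_Ico_natCast :
    Pairwise (Disjoint on fun p : ι → ℕ => univ.pi fun k => Ico (p k : ℝ) (p k + 1)) := by
  intro p q hpq
  refine Set.disjoint_left.2 fun x hxp hxq => hpq (funext fun k => ?_)
  rw [← Nat.floor_eq_on_Ico (p k) (x k) (hxp k (mem_univ k)),
    Nat.floor_eq_on_Ico (q k) (x k) (hxq k (mem_univ k))]

theorem Ici_zero_eq_iUnion_pi_Ico_natCast :
    Ici (0 : ι → ℝ) = ⋃ p : ι → ℕ, univ.pi fun k => Ico (p k : ℝ) (p k + 1) := by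
  ext x
  simp only [mem_Ici, mem_iUnion, mem_univ_pi, mem_Ico, Pi.le_def, Pi.zero_apply]
  constructor
  · intro hx
    exact ⟨fun k => ⌊x k⌋₊, fun k => ⟨Nat.floor_le (hx k), Nat.lt_floor_add_one _⟩⟩
  · rintro ⟨p, hp⟩ k
    exact (Nat.cast_nonneg _).trans (hp k).1

theorem setIntegral_pi_Ico_eq_integral_Icc_add [Fintype ι] (g : (ι → ℝ) → E) (a : ι → ℝ) :
    ∫ x in univ.pi (fun k => Ico (a k) (a k + 1)), g x = ∫ t in Icc 0 1, g (t + a) := by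
  have hpre : (· + a) ⁻¹' (univ.pi fun k => Ico (a k) (a k + 1)) = univ.pi fun _ => Ico 0 1 := by
    ext t
    simp only [mem_preimage, mem_univ_pi, mem_Ico, Pi.add_apply]
    exact forall_congr' fun k => by constructor <;> rintro ⟨h₁, h₂⟩ <;> constructor <;> linarith
  rw [← (measurePreserving_add_right volume a).setIntegral_preimage_emb
    (measurableEmbedding_addRight a), hpre]
  refine setIntegral_congr_set ?_
  rw [volume_pi]
  exact Measure.univ_pi_Ico_ae_eq_Icc

theorem integral_Ici_zero_eq_tsum_integral_Icc [Fintype ι] {g : (ι → ℝ) → E}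
    (hg : IntegrableOn g (Ici 0)) :
    ∫ x in Ici 0, g x = ∑' p : ι → ℕ, ∫ t in Icc 0 1, g (t + fun k => (p k : ℝ)) := by
  rw [Ici_zero_eq_iUnion_pi_Ico_natCast] at hg ⊢
  rw [integral_iUnion (fun p => MeasurableSet.univ_pi fun k => measurableSet_Ico)
    pairwise_disjoint_pi_Ico_natCast hg]
  exact tsum_congr fun p => setIntegral_pi_Ico_eq_integral_Icc_add g _

theorem finite_setOf_integral_Icc_add_natCast_ne_zero [Fintype ι] {g : (ι → ℝ) → E} {R : ι → ℝ}
    (hR : Ici 0 ∩ support g ⊆ Icc 0 R) :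
    {p : ι → ℕ | ∫ t in Icc 0 1, g (t + fun k => (p k : ℝ)) ≠ 0}.Finite := by
  classical
  refine (Set.finite_Iic fun k => ⌊R k⌋₊).subset fun p hp => ?_
  obtain ⟨t, ht, hgt⟩ : ∃ t ∈ Icc (0 : ι → ℝ) 1, g (t + fun k => (p k : ℝ)) ≠ 0 := by
    by_contra! h
    exact hp (setIntegral_eq_zero_of_forall_eq_zero h)
  have hbox := (hR ⟨fun k => add_nonneg (ht.1 k) (Nat.cast_nonneg _), hgt⟩).2
  exact fun k => Nat.le_floor ((le_add_of_nonneg_left (ht.1 k)).trans (hbox k))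

end Tiling

theorem exists_support_comp_sum_smul_subset_Icc {ι : Type*} [Fintype ι]
    {V : Type*} [NormedAddCommGroup V] [InnerProductSpace ℝ V] {β : Type*} [Zero β]
    {α : ι → V} {ξ : V} (hξ : ∀ k, 0 < (inner ℝ (α k) ξ : ℝ))
    {F : V → β} (hFc : HasCompactSupport F) :
    ∃ R : ι → ℝ, Ici 0 ∩ support (fun t : ι → ℝ => F (∑ k, t k • α k)) ⊆ Icc 0 R := by
  obtain ⟨M, hM⟩ := (hFc.isCompact.image
    (continuous_id.inner continuous_const : Continuous fun x : V => inner ℝ x ξ)).bddAbove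
  refine ⟨fun j => M / inner ℝ (α j) ξ, fun t ⟨ht, hFt⟩ => ⟨ht, fun j => ?_⟩⟩
  have hinner : inner ℝ (∑ k, t k • α k) ξ = ∑ k, t k * inner ℝ (α k) ξ := by
    simp only [sum_inner, real_inner_smul_left]
  have hle : t j * inner ℝ (α j) ξ ≤ M :=
    calc t j * inner ℝ (α j) ξ
        ≤ ∑ k, t k * inner ℝ (α k) ξ :=
          Finset.single_le_sum (fun k _ => mul_nonneg (ht k) (hξ k).le) (Finset.mem_univ j)
      _ = inner ℝ (∑ k, t k • α k) ξ := hinner.symm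
      _ ≤ M := hM ⟨_, subset_tsupport F hFt, rfl⟩
  exact (le_div_iff₀ (hξ j)).2 hle

theorem exp_mul_comp_sum_smul_add {ι : Type*} [Fintype ι] {V : Type*} [AddCommGroup V]
    [Module ℝ V] (α : ι → V) (y : ι → ℂ) (F : V → ℂ) (t a : ι → ℝ) :
    Complex.exp (Complex.I * ∑ k, ((t + a) k : ℂ) * y k) * F (∑ k, (t + a) k • α k) =
      Complex.exp (Complex.I * ∑ k, (a k : ℂ) * y k) *
        (Complex.exp (Complex.I * ∑ k, (t k : ℂ) * y k) * F (∑ k, (a k + t k) • α k)) := by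
  have hexp : Complex.I * ∑ k, ((t + a) k : ℂ) * y k =
      Complex.I * ∑ k, (a k : ℂ) * y k + Complex.I * ∑ k, (t k : ℂ) * y k := by
    simp only [Pi.add_apply, Complex.ofReal_add, ← mul_add, ← Finset.sum_add_distrib]
    congr 1
    exact Finset.sum_congr rfl fun k _ => by ring
  rw [hexp, Complex.exp_add, mul_assoc]
  simp only [Pi.add_apply, add_comm (t _)]

/-- If the `α_k` generate a salient cone (there is `ξ` with `⟨α_k,ξ⟩ > 0` for all `k`)
and `F` is continuous with compact support, then
`t ↦ exp(iΣ t_k y_k) F(Σ t_k α_k)` is integrable on `[0,∞)^N`, only finitely many of the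
translated-box-spline terms are nonzero, and
`∫_{[0,∞)^N} exp(iΣ t_k y_k) F(Σ t_k α_k) dt =
  Σ_{p∈ℕ^N} exp(iΣ p_k y_k) ∫_{[0,1]^N} exp(iΣ t_k y_k) F(Σ (p_k+t_k) α_k) dt`. -/
theorem statement9 {d N : ℕ} (α : Fin N → EuclideanSpace ℝ (Fin d))
    (ξ : EuclideanSpace ℝ (Fin d)) (hξ : ∀ k, 0 < (inner ℝ (α k) ξ : ℝ))
    (y : Fin N → ℂ) (F : EuclideanSpace ℝ (Fin d) → ℂ)
    (hF : Continuous F) (hFc : HasCompactSupport F) :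
    IntegrableOn (fun t : Fin N → ℝ =>
        Complex.exp (Complex.I * ∑ k, (t k : ℂ) * y k) * F (∑ k, t k • α k))
      (Set.Ici (0 : Fin N → ℝ)) ∧
    {p : Fin N → ℕ | (Complex.exp (Complex.I * ∑ k, (p k : ℂ) * y k) *
        ∫ t in Set.Icc (0 : Fin N → ℝ) 1,
          Complex.exp (Complex.I * ∑ k, (t k : ℂ) * y k) *
            F (∑ k, ((p k : ℝ) + t k) • α k)) ≠ 0}.Finite ∧
    (∫ t in Set.Ici (0 : Fin N → ℝ),
        Complex.exp (Complex.I * ∑ k, (t k : ℂ) * y k) * F (∑ k, t k • α k)) =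
      ∑' p : Fin N → ℕ,
        Complex.exp (Complex.I * ∑ k, (p k : ℂ) * y k) *
          ∫ t in Set.Icc (0 : Fin N → ℝ) 1,
            Complex.exp (Complex.I * ∑ k, (t k : ℂ) * y k) *
              F (∑ k, ((p k : ℝ) + t k) • α k) := by
  set g : (Fin N → ℝ) → ℂ := fun t =>
    Complex.exp (Complex.I * ∑ k, (t k : ℂ) * y k) * F (∑ k, t k • α k)
  have hg : Continuous g := by fun_prop
  obtain ⟨R, hR⟩ := exists_support_comp_sum_smul_subset_Icc hξ hFc
  have hgR : Ici 0 ∩ support g ⊆ Icc 0 R :=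
    (inter_subset_inter_right _ (support_mul_subset_right _ _)).trans hR
  have hInt : IntegrableOn g (Ici 0) :=
    hg.integrableOn_Icc.of_forall_sdiff_eq_zero measurableSet_Ici fun t ht =>
      notMem_support.1 fun hgt => ht.2 (hgR ⟨ht.1, hgt⟩)
  have htile (p : Fin N → ℕ) : ∫ t in Icc 0 1, g (t + fun k => (p k : ℝ)) =
      Complex.exp (Complex.I * ∑ k, (p k : ℂ) * y k) *
        ∫ t in Icc (0 : Fin N → ℝ) 1, Complex.exp (Complex.I * ∑ k, (t k : ℂ) * y k) *
          F (∑ k, ((p k : ℝ) + t k) • α k) := by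
    simp only [g, exp_mul_comp_sum_smul_add, Complex.ofReal_natCast]
    exact integral_const_mul _ _
  refine ⟨hInt, ?_, ?_⟩
  · simpa only [htile] using finite_setOf_integral_Icc_add_natCast_ne_zero hgR
  · simpa only [htile] using integral_Ici_zero_eq_tsum_integral_Icc hInt
end
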